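/- arXiv:1205.6112 — 2 statements merged into one kernel-verified Lean document; each statement's English description precedes it below -/
import Mathlib

section
/- Let U ⊆ ℝ^n be open and let Φ₁, Φ₂ : U → GL(m, ℂ) be smooth maps taking values in Hermitian matrices. Define Ψ := Φ₂ Φ₁⁻¹ − 𝟙, and the current matrices 𝒥₁ := Φ₁⁻¹ ∇Φ₁, 𝒥₂ := Φ₂⁻¹ ∇Φ₂ and 𝒥_Δ := 𝒥₂ − 𝒥₁ (matrix-valued one-forms). Then the Mazur identity holds pointwise: Trace(ΔΨ) = Trace( ⟨Φ₁⁻¹ 𝒥_Δ†, Φ₂ 𝒥_Δ⟩ ) + Trace( Φ₂ (div 𝒥_Δ) Φ₁⁻¹ ), where Δ is the Euclidean Laplacian, ⟨·,·⟩ denotes the Euclidean contraction of the one-form indices (with matrix multiplication), and div is the Euclidean divergence on the one-form index. -/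
open Matrix

/-- Entrywise `i`-th partial derivative of a matrix-valued map on `ℝⁿ`. -/
noncomputable def mpd {n m : ℕ} (f : (Fin n → ℝ) → Matrix (Fin m) (Fin m) ℂ)
    (i : Fin n) (x : Fin n → ℝ) : Matrix (Fin m) (Fin m) ℂ :=
  Matrix.of fun a b => fderiv ℝ (fun y => f y a b) x (Pi.single i 1)

namespace MazurAux

variable {n m : ℕ}

/-- entrywise differentiability -/
def EDiff (f : (Fin n → ℝ) → Matrix (Fin m) (Fin m) ℂ) (x : Fin n → ℝ) : Prop :=
  ∀ a b, DifferentiableAt ℝ (fun y => f y a b) x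

variable {f g : (Fin n → ℝ) → Matrix (Fin m) (Fin m) ℂ} {x : Fin n → ℝ} {i : Fin n}

theorem mpd_apply (a b : Fin m) :
    mpd f i x a b = fderiv ℝ (fun y => f y a b) x (Pi.single i 1) := rfl

theorem mpd_congr (h : f =ᶠ[nhds x] g) : mpd f i x = mpd g i x := by
  ext a b
  rw [mpd_apply, mpd_apply,
    Filter.EventuallyEq.fderiv_eq (h.mono fun y hy => by rw [hy])]

theorem mpd_const (C : Matrix (Fin m) (Fin m) ℂ) :
    mpd (fun _ => C) i x = 0 := by
  ext a b
  rw [mpd_apply, fderiv_const_apply]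
  rfl

theorem mpd_sub (hf : EDiff f x) (hg : EDiff g x) :
    mpd (fun y => f y - g y) i x = mpd f i x - mpd g i x := by
  ext a b
  simp only [mpd_apply, Matrix.sub_apply]
  rw [fderiv_fun_sub (hf a b) (hg a b)]
  rfl

theorem pd_mul {u v : (Fin n → ℝ) → ℂ} (hu : DifferentiableAt ℝ u x)
    (hv : DifferentiableAt ℝ v x) (w : Fin n → ℝ) :
    fderiv ℝ (fun y => u y * v y) x w
      = fderiv ℝ u x w * v x + u x * fderiv ℝ v x w := by
  rw [fderiv_fun_mul hu hv]
  simp only [ContinuousLinearMap.add_apply, ContinuousLinearMap.coe_smul', Pi.smul_apply, smul_eq_mul]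
  ring

theorem EDiff.mul (hf : EDiff f x) (hg : EDiff g x) :
    EDiff (fun y => f y * g y) x := by
  intro a b
  simp only [Matrix.mul_apply]
  exact DifferentiableAt.fun_sum fun c _ => (hf a c).mul (hg c b)

theorem EDiff.sub (hf : EDiff f x) (hg : EDiff g x) :
    EDiff (fun y => f y - g y) x := by
  intro a b
  simp only [Matrix.sub_apply]
  exact (hf a b).sub (hg a b)

theorem mpd_mul (hf : EDiff f x) (hg : EDiff g x) :
    mpd (fun y => f y * g y) i x = mpd f i x * g x + f x * mpd g i x := by
  ext a b
  simp only [mpd_apply, Matrix.mul_apply, Matrix.add_apply]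
  rw [fderiv_fun_sum (A := fun c y => f y a c * g y c b) fun c _ => (hf a c).mul (hg c b)]
  simp only [ContinuousLinearMap.coe_sum', Finset.sum_apply]
  rw [← Finset.sum_add_distrib]
  refine Finset.sum_congr rfl fun c _ => ?_
  simpa [mpd_apply] using pd_mul (hf a c) (hg c b) (Pi.single i 1)

theorem ediff_det (hf : EDiff f x) :
    DifferentiableAt ℝ (fun y => (f y).det) x := by
  simp only [Matrix.det_apply']
  refine DifferentiableAt.fun_sum fun σ _ => ?_
  exact (HasFDerivAt.finset_prod (u := Finset.univ)
    (g := fun c y => f y (σ c) c)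
    (fun c _ => (hf (σ c) c).hasFDerivAt)).differentiableAt.const_mul _

theorem ediff_inv (hf : EDiff f x) (hx : IsUnit (f x)) :
    EDiff (fun y => (f y)⁻¹) x := by
  intro a b
  have hdet : (f x).det ≠ 0 := by
    have := (Matrix.isUnit_iff_isUnit_det _).mp hx
    exact this.ne_zero
  have key : (fun y => (f y)⁻¹ a b)
      = fun y => ((f y).det)⁻¹ * ((f y).updateRow b (Pi.single a 1)).det := by
    funext y
    rw [Matrix.inv_def, Matrix.smul_apply, Ring.inverse_eq_inv, smul_eq_mul,
      Matrix.adjugate_apply]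
  rw [key]
  have hadj : DifferentiableAt ℝ
      (fun y => ((f y).updateRow b (Pi.single a 1)).det) x := by
    apply ediff_det (f := fun y => (f y).updateRow b (Pi.single a 1))
    intro c d
    by_cases hc : c = b
    · simp only [Matrix.updateRow_apply, hc, if_true]
      exact differentiableAt_const _
    · simp only [Matrix.updateRow_apply, hc, if_false]
      exact hf c d
  exact ((ediff_det hf).inv hdet).mul hadj


variable {U : Set (Fin n → ℝ)}

theorem mpd_inv (hU : IsOpen U) (hx : x ∈ U)
    (hunit : ∀ y ∈ U, IsUnit (f y)) (hf : EDiff f x) :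
    mpd (fun y => (f y)⁻¹) i x = -((f x)⁻¹ * mpd f i x * (f x)⁻¹) := by
  have hdet : ∀ y ∈ U, IsUnit (f y).det := fun y hy =>
    (Matrix.isUnit_iff_isUnit_det _).mp (hunit y hy)
  have h0 : mpd (fun y => (f y)⁻¹ * f y) i x = 0 := by
    rw [mpd_congr (g := fun _ => (1 : Matrix (Fin m) (Fin m) ℂ))
      (Filter.eventuallyEq_of_mem (hU.mem_nhds hx) fun y hy =>
        Matrix.nonsing_inv_mul _ (hdet y hy))]
    exact mpd_const 1
  have h1 := mpd_mul (i := i) (ediff_inv hf (hunit x hx)) hf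
  rw [h0] at h1
  have h2 : mpd (fun y => (f y)⁻¹) i x * f x = -((f x)⁻¹ * mpd f i x) := by
    have := h1.symm
    linear_combination (norm := noncomm_ring) this
  calc mpd (fun y => (f y)⁻¹) i x
      = mpd (fun y => (f y)⁻¹) i x * (f x * (f x)⁻¹) := by
        rw [Matrix.mul_nonsing_inv _ (hdet x hx), mul_one]
    _ = (mpd (fun y => (f y)⁻¹) i x * f x) * (f x)⁻¹ := by rw [mul_assoc]
    _ = -((f x)⁻¹ * mpd f i x * (f x)⁻¹) := by rw [h2]; noncomm_ring

theorem ediff_mpd (hU : IsOpen U) (hx : x ∈ U)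
    (hs : ∀ a b, ContDiffOn ℝ (⊤ : ℕ∞) (fun y => f y a b) U) :
    EDiff (mpd f i) x := by
  intro a b
  have hc : ContDiffAt ℝ (⊤ : ℕ∞) (fun y => f y a b) x :=
    (hs a b).contDiffAt (hU.mem_nhds hx)
  have hd : ContDiffAt ℝ (⊤ : ℕ∞) (fderiv ℝ fun y => f y a b) x :=
    hc.fderiv_right (by simp)
  exact (ContinuousLinearMap.apply ℝ ℂ (Pi.single i 1)).differentiableAt.comp x
    (hd.differentiableAt (by simp))

theorem mpd_herm (hU : IsOpen U) (hx : x ∈ U)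
    (hherm : ∀ y ∈ U, (f y).IsHermitian) (hf : EDiff f x) :
    (mpd f i x).IsHermitian := by
  have key : ∀ a b, mpd f i x b a = star (mpd f i x a b) := by
    intro a b
    have heq : (fun y => f y b a) =ᶠ[nhds x]
        (fun y => (Complex.conjCLE : ℂ →L[ℝ] ℂ) (f y a b)) :=
      Filter.eventuallyEq_of_mem (hU.mem_nhds hx) fun y hy => by
        have := (hherm y hy).apply b a
        simp only [Complex.conjCLE_apply, ContinuousLinearEquiv.coe_coe]
        rw [← this]
        rfl
    have hcomp : fderiv ℝ (fun y => (Complex.conjCLE : ℂ →L[ℝ] ℂ) (f y a b)) x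
        = (Complex.conjCLE : ℂ →L[ℝ] ℂ).comp (fderiv ℝ (fun y => f y a b) x) :=
      ((Complex.conjCLE : ℂ →L[ℝ] ℂ).hasFDerivAt.comp x (hf a b).hasFDerivAt).fderiv
    rw [mpd_apply, mpd_apply, Filter.EventuallyEq.fderiv_eq heq, hcomp]
    rfl
  show (mpd f i x)ᴴ = mpd f i x
  ext a b
  rw [Matrix.conjTranspose_apply, key a b, star_star]


theorem trace_alg {P Q A D₁ D₂ K : Matrix (Fin m) (Fin m) ℂ}
    (hQdet : IsUnit Q.det)
    (hPinv : (P⁻¹)ᴴ = P⁻¹) (hQinv : (Q⁻¹)ᴴ = Q⁻¹)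
    (hD₁ : D₁ᴴ = D₁) (hD₂ : D₂ᴴ = D₂)
    (hA : A = Q⁻¹ * D₂ - P⁻¹ * D₁) :
    ((D₂ * A + Q * K) * P⁻¹ + (Q * A) * -(P⁻¹ * D₁ * P⁻¹)).trace
      = (P⁻¹ * Aᴴ * (Q * A)).trace + (Q * K * P⁻¹).trace := by
  have hAH : Aᴴ = D₂ * Q⁻¹ - D₁ * P⁻¹ := by
    rw [hA, Matrix.conjTranspose_sub, Matrix.conjTranspose_mul,
      Matrix.conjTranspose_mul, hD₁, hD₂, hPinv, hQinv]
  have hQQ : Q⁻¹ * (Q * A) = A := by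
    rw [← mul_assoc, Matrix.nonsing_inv_mul _ hQdet, one_mul]
  have hRHS : P⁻¹ * Aᴴ * (Q * A)
      = P⁻¹ * (D₂ * A) - P⁻¹ * (D₁ * (P⁻¹ * (Q * A))) := by
    rw [hAH, Matrix.mul_sub, Matrix.sub_mul]
    congr 1
    · simp only [mul_assoc, hQQ]
    · simp only [mul_assoc]
  rw [hRHS]
  simp only [Matrix.add_mul, mul_neg, Matrix.trace_add, Matrix.trace_neg,
    Matrix.trace_sub]
  rw [Matrix.trace_mul_comm (D₂ * A) P⁻¹,
    Matrix.trace_mul_comm (Q * A) (P⁻¹ * D₁ * P⁻¹)]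
  have : P⁻¹ * D₁ * P⁻¹ * (Q * A) = P⁻¹ * (D₁ * (P⁻¹ * (Q * A))) := by
    simp only [mul_assoc]
  rw [this]
  ring

end MazurAux


open MazurAux

/-- The Mazur identity: for two smooth maps `Φ₁, Φ₂` from an open `U ⊆ ℝⁿ` into
invertible Hermitian `m × m` complex matrices, with `Ψ := Φ₂Φ₁⁻¹ − 𝟙`,
`𝒥ₐ := Φₐ⁻¹∇Φₐ` and `𝒥_Δ := 𝒥₂ − 𝒥₁`, one has, pointwise on `U`,
`Trace(ΔΨ) = Σᵢ Trace(Φ₁⁻¹ (𝒥_Δ)ᵢᴴ Φ₂ (𝒥_Δ)ᵢ) + Trace(Φ₂ (Σᵢ ∂ᵢ(𝒥_Δ)ᵢ) Φ₁⁻¹)`. -/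
theorem mazur_identity {n m : ℕ} (U : Set (Fin n → ℝ)) (hU : IsOpen U)
    (Φ₁ Φ₂ : (Fin n → ℝ) → Matrix (Fin m) (Fin m) ℂ)
    (hΦ₁smooth : ∀ a b, ContDiffOn ℝ (⊤ : ℕ∞) (fun y => Φ₁ y a b) U)
    (hΦ₂smooth : ∀ a b, ContDiffOn ℝ (⊤ : ℕ∞) (fun y => Φ₂ y a b) U)
    (hΦ₁herm : ∀ x ∈ U, (Φ₁ x).IsHermitian)
    (hΦ₂herm : ∀ x ∈ U, (Φ₂ x).IsHermitian)
    (hΦ₁inv : ∀ x ∈ U, IsUnit (Φ₁ x))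
    (hΦ₂inv : ∀ x ∈ U, IsUnit (Φ₂ x))
    (Ψ : (Fin n → ℝ) → Matrix (Fin m) (Fin m) ℂ)
    (hΨ : Ψ = fun x => Φ₂ x * (Φ₁ x)⁻¹ - 1)
    (J₁ J₂ JΔ : Fin n → (Fin n → ℝ) → Matrix (Fin m) (Fin m) ℂ)
    (hJ₁ : J₁ = fun i x => (Φ₁ x)⁻¹ * mpd Φ₁ i x)
    (hJ₂ : J₂ = fun i x => (Φ₂ x)⁻¹ * mpd Φ₂ i x)
    (hJΔ : JΔ = fun i x => J₂ i x - J₁ i x) :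
    ∀ x ∈ U,
      (∑ i, mpd (mpd Ψ i) i x).trace =
        (∑ i, (Φ₁ x)⁻¹ * (JΔ i x)ᴴ * (Φ₂ x * JΔ i x)).trace +
          (Φ₂ x * (∑ i, mpd (JΔ i) i x) * (Φ₁ x)⁻¹).trace := by
  intro x hx
  classical
  have hnx := hU.mem_nhds hx
  have hE₁ : ∀ y ∈ U, EDiff Φ₁ y := fun y hy a b =>
    ((hΦ₁smooth a b).contDiffAt (hU.mem_nhds hy)).differentiableAt (by simp)
  have hE₂ : ∀ y ∈ U, EDiff Φ₂ y := fun y hy a b =>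
    ((hΦ₂smooth a b).contDiffAt (hU.mem_nhds hy)).differentiableAt (by simp)
  have hdet₁ : ∀ y ∈ U, IsUnit (Φ₁ y).det := fun y hy =>
    (Matrix.isUnit_iff_isUnit_det _).mp (hΦ₁inv y hy)
  have hdet₂ : ∀ y ∈ U, IsUnit (Φ₂ y).det := fun y hy =>
    (Matrix.isUnit_iff_isUnit_det _).mp (hΦ₂inv y hy)
  have hI₁ : ∀ y ∈ U, EDiff (fun z => (Φ₁ z)⁻¹) y := fun y hy =>
    ediff_inv (hE₁ y hy) (hΦ₁inv y hy)
  have hI₂ : ∀ y ∈ U, EDiff (fun z => (Φ₂ z)⁻¹) y := fun y hy =>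
    ediff_inv (hE₂ y hy) (hΦ₂inv y hy)
  have hM₁ : ∀ (i : Fin n), ∀ y ∈ U, EDiff (mpd Φ₁ i) y := fun i y hy =>
    ediff_mpd hU hy hΦ₁smooth
  have hM₂ : ∀ (i : Fin n), ∀ y ∈ U, EDiff (mpd Φ₂ i) y := fun i y hy =>
    ediff_mpd hU hy hΦ₂smooth
  have hJΔfun : ∀ i, JΔ i =
      fun z => (Φ₂ z)⁻¹ * mpd Φ₂ i z - (Φ₁ z)⁻¹ * mpd Φ₁ i z := by
    intro i; funext z; rw [hJΔ, hJ₂, hJ₁]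
  have hEJ : ∀ (i : Fin n), ∀ y ∈ U, EDiff (JΔ i) y := by
    intro i y hy
    rw [hJΔfun i]
    exact ((hI₂ y hy).mul (hM₂ i y hy)).sub ((hI₁ y hy).mul (hM₁ i y hy))
  -- first derivative of Ψ on U
  have step1 : ∀ (i : Fin n), ∀ y ∈ U, mpd Ψ i y = Φ₂ y * JΔ i y * (Φ₁ y)⁻¹ := by
    intro i y hy
    have hconst : EDiff (fun _ : Fin n → ℝ => (1 : Matrix (Fin m) (Fin m) ℂ)) y :=
      fun a b => differentiableAt_const _
    have hΨeq : Ψ = fun z => (fun z => Φ₂ z * (Φ₁ z)⁻¹) z -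
        (fun _ : Fin n → ℝ => (1 : Matrix (Fin m) (Fin m) ℂ)) z := by
      rw [hΨ]
    rw [hΨeq, mpd_sub ((hE₂ y hy).mul (hI₁ y hy)) hconst, mpd_const, sub_zero,
      mpd_mul (hE₂ y hy) (hI₁ y hy), mpd_inv hU hy hΦ₁inv (hE₁ y hy),
      hJΔfun i]
    have hQQ : Φ₂ y * (Φ₂ y)⁻¹ = 1 := Matrix.mul_nonsing_inv _ (hdet₂ y hy)
    simp only [sub_eq_add_neg, mul_add, add_mul, mul_neg, neg_mul,
      ← mul_assoc, hQQ, one_mul]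
  -- second derivative of Ψ at x
  have key : ∀ i : Fin n, mpd (mpd Ψ i) i x
      = (mpd Φ₂ i x * JΔ i x + Φ₂ x * mpd (JΔ i) i x) * (Φ₁ x)⁻¹
        + (Φ₂ x * JΔ i x) * -((Φ₁ x)⁻¹ * mpd Φ₁ i x * (Φ₁ x)⁻¹) := by
    intro i
    have hloc : mpd Ψ i =ᶠ[nhds x]
        fun y => (Φ₂ y * JΔ i y) * (Φ₁ y)⁻¹ :=
      Filter.eventuallyEq_of_mem hnx fun y hy => step1 i y hy
    rw [mpd_congr hloc,
      mpd_mul (f := fun y => Φ₂ y * JΔ i y) (g := fun y => (Φ₁ y)⁻¹)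
        ((hE₂ x hx).mul (hEJ i x hx)) (hI₁ x hx),
      mpd_mul (hE₂ x hx) (hEJ i x hx), mpd_inv hU hx hΦ₁inv (hE₁ x hx)]
  -- Hermiticity facts at x
  have hPinv : ((Φ₁ x)⁻¹)ᴴ = (Φ₁ x)⁻¹ := (hΦ₁herm x hx).inv
  have hQinv : ((Φ₂ x)⁻¹)ᴴ = (Φ₂ x)⁻¹ := (hΦ₂herm x hx).inv
  have hD₁ : ∀ i : Fin n, (mpd Φ₁ i x)ᴴ = mpd Φ₁ i x := fun i =>
    mpd_herm hU hx hΦ₁herm (hE₁ x hx)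
  have hD₂ : ∀ i : Fin n, (mpd Φ₂ i x)ᴴ = mpd Φ₂ i x := fun i =>
    mpd_herm hU hx hΦ₂herm (hE₂ x hx)
  have hAi : ∀ i : Fin n, JΔ i x =
      (Φ₂ x)⁻¹ * mpd Φ₂ i x - (Φ₁ x)⁻¹ * mpd Φ₁ i x := fun i =>
    congrFun (hJΔfun i) x
  -- assemble
  calc (∑ i, mpd (mpd Ψ i) i x).trace
      = ∑ i, (mpd (mpd Ψ i) i x).trace := Matrix.trace_sum _ _
    _ = ∑ i, (((Φ₁ x)⁻¹ * (JΔ i x)ᴴ * (Φ₂ x * JΔ i x)).trace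
          + (Φ₂ x * mpd (JΔ i) i x * (Φ₁ x)⁻¹).trace) := by
        refine Finset.sum_congr rfl fun i _ => ?_
        rw [key i]
        exact trace_alg (hdet₂ x hx) hPinv hQinv (hD₁ i) (hD₂ i) (hAi i)
    _ = (∑ i, (Φ₁ x)⁻¹ * (JΔ i x)ᴴ * (Φ₂ x * JΔ i x)).trace +
          (Φ₂ x * (∑ i, mpd (JΔ i) i x) * (Φ₁ x)⁻¹).trace := by
        rw [Finset.sum_add_distrib]
        congr 1
        · exact (Matrix.trace_sum _ _).symm
        · rw [Finset.mul_sum, Finset.sum_mul, Matrix.trace_sum]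
end

section
/- Let U ⊆ ℝ³ be open, α ∈ ℝ, and let ℰ : U → ℂ be a C² function with 1 + ℰ nowhere zero. Set Λ := (e^{iα}/2)(1 − ℰ) and N := −|Λ|² − Re(ℰ), and assume N is nowhere zero. Then the pair of Ernst equations N·Δℰ = −⟨∇ℰ, ∇ℰ + 2Λ̄∇Λ⟩ and N·ΔΛ = −⟨∇Λ, ∇ℰ + 2Λ̄∇Λ⟩ (with the flat Laplacian Δ and flat bilinear—not Hermitian—inner product ⟨·,·⟩ on gradients) holds if and only if the single equation Δ( (1 + ℰ)⁻¹ ) = 0 holds on U. -/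
open Complex

/-- `i`-th partial derivative of a map on `ℝⁿ`. -/
noncomputable def pd {n : ℕ} {E : Type*} [NormedAddCommGroup E] [NormedSpace ℝ E]
    (f : (Fin n → ℝ) → E) (i : Fin n) (x : Fin n → ℝ) : E :=
  fderiv ℝ f x (Pi.single i 1)

/-- Flat Laplacian of a map on `ℝⁿ`. -/
noncomputable def lap {n : ℕ} {E : Type*} [NormedAddCommGroup E] [NormedSpace ℝ E]
    (f : (Fin n → ℝ) → E) (x : Fin n → ℝ) : E :=
  ∑ i, pd (pd f i) i x

/-!
Under the ansatz `Λ = c (1 - ℰ)` with `|c| = 1/2` one has `N = -|1 + ℰ|² / 4` and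
`∇ℰ + 2 Λ̄ ∇Λ = ((1 + ℰ̄)/2) ∇ℰ`, so both Ernst equations become nonzero multiples of
`(1 + ℰ) Δℰ = 2 ⟨∇ℰ, ∇ℰ⟩`. The chain rule `Δ(φ ∘ ℰ) = φ'(ℰ) Δℰ + φ''(ℰ) ⟨∇ℰ, ∇ℰ⟩` for a
holomorphic `φ`, applied to `φ z = (1 + z)⁻¹`, shows that `(1 + ℰ)³ Δ(1 + ℰ)⁻¹` is minus the
difference of the two sides of that equation.
-/

open Filter Topology ComplexConjugate

section PartialDerivatives

variable {n : ℕ} {E : Type*} [NormedAddCommGroup E] [NormedSpace ℝ E] {x : Fin n → ℝ}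

theorem HasFDerivAt.pd_eq {f : (Fin n → ℝ) → E} {L : (Fin n → ℝ) →L[ℝ] E}
    (h : HasFDerivAt f L x) (i : Fin n) : pd f i x = L (Pi.single i 1) := by
  rw [pd, h.fderiv]

theorem Filter.EventuallyEq.pd_eq {f g : (Fin n → ℝ) → E} (h : f =ᶠ[𝓝 x] g) (i : Fin n) :
    pd f i x = pd g i x := by
  rw [pd, pd, h.fderiv_eq]

theorem ContDiffOn.differentiableAt_pd {f : (Fin n → ℝ) → E} {U : Set (Fin n → ℝ)}
    (hf : ContDiffOn ℝ 2 f U) (hU : IsOpen U) (hx : x ∈ U) (i : Fin n) :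
    DifferentiableAt ℝ (pd f i) x :=
  (((hf.fderiv_of_isOpen (m := 1) hU (by norm_num)).differentiableOn one_ne_zero).differentiableAt
    (hU.mem_nhds hx)).clm_apply (differentiableAt_const _)

theorem pd_comp {φ : ℂ → ℂ} {φ' : ℂ} {f : (Fin n → ℝ) → ℂ}
    (hφ : HasDerivAt φ φ' (f x)) (hf : DifferentiableAt ℝ f x) (i : Fin n) :
    pd (fun y => φ (f y)) i x = φ' * pd f i x :=
  (hφ.comp_hasFDerivAt x hf.hasFDerivAt).pd_eq i

theorem pd_mul {f g : (Fin n → ℝ) → ℂ} (hf : DifferentiableAt ℝ f x)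
    (hg : DifferentiableAt ℝ g x) (i : Fin n) :
    pd (fun y => f y * g y) i x = pd f i x * g x + f x * pd g i x := by
  rw [(hf.hasFDerivAt.fun_mul hg.hasFDerivAt).pd_eq, pd, pd]
  simp only [add_apply, smul_apply, smul_eq_mul]
  ring

theorem lap_comp {S : Set ℂ} (hS : IsOpen S) {φ φ' φ'' : ℂ → ℂ}
    (hφ : ∀ z ∈ S, HasDerivAt φ (φ' z) z) (hφ' : ∀ z ∈ S, HasDerivAt φ' (φ'' z) z)
    {f : (Fin n → ℝ) → ℂ} (hfx : f x ∈ S) (hf : ∀ᶠ y in 𝓝 x, DifferentiableAt ℝ f y)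
    (hf2 : ∀ i, DifferentiableAt ℝ (pd f i) x) :
    lap (fun y => φ (f y)) x = φ' (f x) * lap f x + φ'' (f x) * ∑ i, pd f i x ^ 2 := by
  have hdiff := hf.self_of_nhds
  have hfS : ∀ᶠ y in 𝓝 x, f y ∈ S :=
    hdiff.continuousAt.preimage_mem_nhds (hS.mem_nhds hfx)
  have hpd (i : Fin n) : pd (fun y => φ (f y)) i =ᶠ[𝓝 x] fun y => φ' (f y) * pd f i y :=
    (hf.and hfS).mono fun y hy => pd_comp (hφ _ hy.2) hy.1 i
  have hφ'f : HasFDerivAt (fun y => φ' (f y)) _ x :=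
    (hφ' _ hfx).comp_hasFDerivAt x hdiff.hasFDerivAt
  rw [lap, lap, Finset.mul_sum, Finset.mul_sum, ← Finset.sum_add_distrib]
  refine Finset.sum_congr rfl fun i _ => ?_
  rw [(hpd i).pd_eq, pd_mul hφ'f.differentiableAt (hf2 i), pd_comp (hφ' _ hfx) hdiff]
  ring

end PartialDerivatives

section IsraelWilsonPerjes

variable {n : ℕ} {c : ℂ} {f : (Fin n → ℝ) → ℂ} {x : Fin n → ℝ}

theorem conj_mul_self_of_norm_eq_half (hc : ‖c‖ = 1 / 2) : conj c * c = 1 / 4 := by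
  rw [conj_mul', hc]
  norm_num

theorem ofReal_iwp_killing_norm (hc : ‖c‖ = 1 / 2) (e : ℂ) :
    ((-normSq (c * (1 - e)) - e.re : ℝ) : ℂ) = -((1 + e) * (1 + conj e)) / 4 := by
  have hcc := conj_mul_self_of_norm_eq_half hc
  rw [ofReal_sub, ofReal_neg, normSq_eq_conj_mul_self, re_eq_add_conj, map_mul, map_sub, map_one]
  linear_combination (-(1 - e) * (1 - conj e)) * hcc

theorem iwp_ernst_current (hc : ‖c‖ = 1 / 2) (e d : ℂ) :
    d + 2 * conj (c * (1 - e)) * (-c * d) = (1 + conj e) / 2 * d := by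
  have hcc := conj_mul_self_of_norm_eq_half hc
  rw [map_mul, map_sub, map_one]
  linear_combination (-2 * (1 - conj e) * d) * hcc

theorem hasDerivAt_iwp (z : ℂ) : HasDerivAt (fun z => c * (1 - z)) (-c) z := by
  simpa using ((hasDerivAt_id z).const_sub 1).const_mul c

theorem pd_iwp (hf : DifferentiableAt ℝ f x) (i : Fin n) :
    pd (fun y => c * (1 - f y)) i x = -c * pd f i x :=
  pd_comp (hasDerivAt_iwp (f x)) hf i

theorem lap_iwp (hf : ∀ᶠ y in 𝓝 x, DifferentiableAt ℝ f y)
    (hf2 : ∀ i, DifferentiableAt ℝ (pd f i) x) :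
    lap (fun y => c * (1 - f y)) x = -c * lap f x := by
  simpa using lap_comp isOpen_univ (φ'' := fun _ => 0) (fun z _ => hasDerivAt_iwp z)
    (fun z _ => hasDerivAt_const z (-c)) (Set.mem_univ _) hf hf2

theorem iwp_gravitational_ernst_iff (hc : ‖c‖ = 1 / 2) (hfx : 1 + f x ≠ 0)
    (hf : DifferentiableAt ℝ f x) :
    ((-normSq (c * (1 - f x)) - (f x).re : ℝ) : ℂ) * lap f x =
        -∑ i, pd f i x *
          (pd f i x + 2 * conj (c * (1 - f x)) * pd (fun y => c * (1 - f y)) i x) ↔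
      (1 + f x) * lap f x = 2 * ∑ i, pd f i x ^ 2 := by
  have hk : -(1 + conj (f x)) / 4 ≠ 0 := by
    rw [← map_one conj, ← map_add]
    exact div_ne_zero (neg_ne_zero.2 ((map_ne_zero _).2 hfx)) (by norm_num)
  have hsum : ∑ i, pd f i x * ((1 + conj (f x)) / 2 * pd f i x) =
      (1 + conj (f x)) / 2 * ∑ i, pd f i x ^ 2 := by
    rw [Finset.mul_sum]
    exact Finset.sum_congr rfl fun i _ => by ring
  simp only [pd_iwp hf, iwp_ernst_current hc, ofReal_iwp_killing_norm hc, hsum]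
  refine Iff.trans ?_ (mul_right_inj' hk)
  constructor <;> intro h <;> linear_combination h

theorem iwp_electromagnetic_ernst_iff (hc : ‖c‖ = 1 / 2) (hfx : 1 + f x ≠ 0)
    (hf : ∀ᶠ y in 𝓝 x, DifferentiableAt ℝ f y) (hf2 : ∀ i, DifferentiableAt ℝ (pd f i) x) :
    ((-normSq (c * (1 - f x)) - (f x).re : ℝ) : ℂ) * lap (fun y => c * (1 - f y)) x =
        -∑ i, pd (fun y => c * (1 - f y)) i x *
          (pd f i x + 2 * conj (c * (1 - f x)) * pd (fun y => c * (1 - f y)) i x) ↔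
      (1 + f x) * lap f x = 2 * ∑ i, pd f i x ^ 2 := by
  have hc0 : c ≠ 0 := by rintro rfl; norm_num at hc
  have hk : c * (1 + conj (f x)) / 4 ≠ 0 := by
    rw [← map_one conj, ← map_add]
    exact div_ne_zero (mul_ne_zero hc0 ((map_ne_zero _).2 hfx)) (by norm_num)
  have hsum : ∑ i, -c * pd f i x * ((1 + conj (f x)) / 2 * pd f i x) =
      -c * (1 + conj (f x)) / 2 * ∑ i, pd f i x ^ 2 := by
    rw [Finset.mul_sum]
    exact Finset.sum_congr rfl fun i _ => by ring
  simp only [pd_iwp hf.self_of_nhds, iwp_ernst_current hc, ofReal_iwp_killing_norm hc,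
    lap_iwp hf hf2, hsum]
  refine Iff.trans ?_ (mul_right_inj' hk)
  constructor <;> intro h <;> linear_combination h

theorem lap_inv_one_add_eq_zero_iff (hfx : 1 + f x ≠ 0)
    (hf : ∀ᶠ y in 𝓝 x, DifferentiableAt ℝ f y) (hf2 : ∀ i, DifferentiableAt ℝ (pd f i) x) :
    lap (fun y => (1 + f y)⁻¹) x = 0 ↔ (1 + f x) * lap f x = 2 * ∑ i, pd f i x ^ 2 := by
  have hφ (z : ℂ) (hz : 1 + z ≠ 0) : HasDerivAt (fun z => (1 + z)⁻¹) (-((1 + z) ^ 2)⁻¹) z :=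
    (((hasDerivAt_id' z).const_add 1).fun_inv hz).congr_deriv (by ring)
  have hφ' (z : ℂ) (hz : 1 + z ≠ 0) :
      HasDerivAt (fun z => -((1 + z) ^ 2)⁻¹) (2 * ((1 + z) ^ 3)⁻¹) z :=
    ((((hasDerivAt_id' z).const_add 1).fun_pow 2).fun_inv (pow_ne_zero 2 hz)).fun_neg.congr_deriv
      (by field_simp; ring)
  rw [lap_comp (isOpen_ne_fun (continuous_const.add continuous_id) continuous_const) hφ hφ' hfx
    hf hf2]
  have hcleared : (1 + f x) ^ 3 * (-((1 + f x) ^ 2)⁻¹ * lap f x +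
      2 * ((1 + f x) ^ 3)⁻¹ * ∑ i, pd f i x ^ 2) =
      -((1 + f x) * lap f x - 2 * ∑ i, pd f i x ^ 2) := by
    field_simp
    ring
  rw [← mul_right_inj' (pow_ne_zero 3 hfx), mul_zero, hcleared, neg_eq_zero, sub_eq_zero]

end IsraelWilsonPerjes

theorem iwp_ernst_reduction_general (U : Set (Fin 3 → ℝ)) (hU : IsOpen U) (α : ℝ)
    (ℰ : (Fin 3 → ℝ) → ℂ)
    (hℰC2 : ContDiffOn ℝ 2 ℰ U)
    (hℰne : ∀ x ∈ U, 1 + ℰ x ≠ 0)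
    (Λ : (Fin 3 → ℝ) → ℂ)
    (hΛ : Λ = fun x => (Complex.exp (Complex.I * α) / 2) * (1 - ℰ x))
    (N : (Fin 3 → ℝ) → ℝ)
    (hN : N = fun x => -Complex.normSq (Λ x) - (ℰ x).re) :
    ((∀ x ∈ U,
        (N x : ℂ) * lap ℰ x =
          -∑ i, pd ℰ i x * (pd ℰ i x + 2 * (starRingEnd ℂ) (Λ x) * pd Λ i x)) ∧
      (∀ x ∈ U,
        (N x : ℂ) * lap Λ x =
          -∑ i, pd Λ i x * (pd ℰ i x + 2 * (starRingEnd ℂ) (Λ x) * pd Λ i x)))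
    ↔ (∀ x ∈ U, lap (fun y => (1 + ℰ y)⁻¹) x = 0) := by
  subst hN hΛ
  have hc : ‖Complex.exp (Complex.I * α) / 2‖ = 1 / 2 := by simp
  have hdiff : ∀ x ∈ U, ∀ᶠ y in 𝓝 x, DifferentiableAt ℝ ℰ y := fun x hx =>
    eventually_of_mem (hU.mem_nhds hx) fun y hy =>
      (hℰC2.differentiableOn two_ne_zero).differentiableAt (hU.mem_nhds hy)
  have hdiff2 : ∀ x ∈ U, ∀ i, DifferentiableAt ℝ (pd ℰ i) x := fun x hx =>
    hℰC2.differentiableAt_pd hU hx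
  constructor
  · rintro ⟨hernst, -⟩ x hx
    exact (lap_inv_one_add_eq_zero_iff (hℰne x hx) (hdiff x hx) (hdiff2 x hx)).2
      ((iwp_gravitational_ernst_iff hc (hℰne x hx) (hdiff x hx).self_of_nhds).1 (hernst x hx))
  · intro hharm
    have hreduced x (hx : x ∈ U) :=
      (lap_inv_one_add_eq_zero_iff (hℰne x hx) (hdiff x hx) (hdiff2 x hx)).1 (hharm x hx)
    exact ⟨fun x hx => (iwp_gravitational_ernst_iff hc (hℰne x hx) (hdiff x hx).self_of_nhds).2
        (hreduced x hx),
      fun x hx => (iwp_electromagnetic_ernst_iff hc (hℰne x hx) (hdiff x hx) (hdiff2 x hx)).2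
        (hreduced x hx)⟩

/-- Under the Israel–Wilson–Perjés ansatz `Λ = (e^{iα}/2)(1 − ℰ)`,
`N = −|Λ|² − Re ℰ`, the pair of Ernst equations holds on `U` if and only if
`(1 + ℰ)⁻¹` is harmonic on `U`. -/
theorem iwp_ernst_reduction (U : Set (Fin 3 → ℝ)) (hU : IsOpen U) (α : ℝ)
    (ℰ : (Fin 3 → ℝ) → ℂ)
    (hℰC2 : ContDiffOn ℝ 2 ℰ U)
    (hℰne : ∀ x ∈ U, 1 + ℰ x ≠ 0)
    (Λ : (Fin 3 → ℝ) → ℂ)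
    (hΛ : Λ = fun x => (Complex.exp (Complex.I * α) / 2) * (1 - ℰ x))
    (N : (Fin 3 → ℝ) → ℝ)
    (hN : N = fun x => -Complex.normSq (Λ x) - (ℰ x).re)
    (hNne : ∀ x ∈ U, N x ≠ 0) :
    ((∀ x ∈ U,
        (N x : ℂ) * lap ℰ x =
          -∑ i, pd ℰ i x * (pd ℰ i x + 2 * (starRingEnd ℂ) (Λ x) * pd Λ i x)) ∧
      (∀ x ∈ U,
        (N x : ℂ) * lap Λ x =
          -∑ i, pd Λ i x * (pd ℰ i x + 2 * (starRingEnd ℂ) (Λ x) * pd Λ i x)))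
    ↔ (∀ x ∈ U, lap (fun y => (1 + ℰ y)⁻¹) x = 0) :=
  iwp_ernst_reduction_general U hU α ℰ hℰC2 hℰne Λ hΛ N hN
end
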